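/- If X is a compact Hausdorff space that is not scattered and the weight of X is less than cov(M), then X contains a subset homeomorphic to the Cantor set. -/

import Mathlib

/-- S contains a homeomorphic copy of the Cantor set 2^ω. -/
def HasCantorSubset {Y : Type*} [TopologicalSpace Y] (S : Set Y) : Prop :=
  ∃ C : Set Y, C ⊆ S ∧ Nonempty (C ≃ₜ (ℕ → Bool))

/-- cov(M): the least cardinal κ such that ℝ is the union of κ meager sets. -/
noncomputable def covMeager : Cardinal :=
  sInf {κ : Cardinal | ∃ (ι : Type) (E : ι → Set ℝ), Cardinal.mk ι = κ ∧
    (∀ i, IsMeagre (E i)) ∧ (⋃ i, E i) = Set.univ}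


open Set Topology

section Generic
variable {α : Type*} [TopologicalSpace α]

lemma nwd_of_locally_avoidable {E : Set α}
    (h : ∀ U : Set α, IsOpen U → U.Nonempty → ∃ V, V ⊆ U ∧ IsOpen V ∧ V.Nonempty ∧ V ∩ E = ∅) :
    IsNowhereDense E := by
  rw [IsNowhereDense]
  by_contra hne
  obtain ⟨x, hx⟩ := Set.nonempty_iff_ne_empty.2 hne
  obtain ⟨V, hVsub, hVo, hVne, hVE⟩ := h _ isOpen_interior ⟨x, hx⟩
  obtain ⟨v, hv⟩ := hVne
  have hvcl : v ∈ closure E := interior_subset (hVsub hv)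
  rw [mem_closure_iff] at hvcl
  obtain ⟨e, heV, heE⟩ := hvcl V hVo hv
  have : e ∈ V ∩ E := ⟨heV, heE⟩
  rw [hVE] at this
  exact this

lemma IsNowhereDense.isMeagre' {s : Set α} (h : IsNowhereDense s) : IsMeagre s := by
  rw [isMeagre_iff_countable_union_isNowhereDense]
  exact ⟨{closure s}, by simpa using h.closure, Set.countable_singleton _,
    by simpa using subset_closure⟩

end Generic

section Cantor

abbrev Dc := ℕ → Bool

def Cyl (p : List Bool) : Set Dc := {y | ∀ i, i < p.length → y i = p.getD i false}

lemma isOpen_cyl (p : List Bool) : IsOpen (Cyl p) := by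
  have h : Cyl p = ⋂ i : Fin p.length, (fun y : Dc => y i.1) ⁻¹' {p.getD i.1 false} := by
    ext y
    simp only [Cyl, Set.mem_setOf_eq, Set.mem_iInter, Set.mem_preimage, Set.mem_singleton_iff]
    exact ⟨fun h i => h i.1 i.2, fun h i hi => h ⟨i, hi⟩⟩
  rw [h]
  exact isOpen_iInter_of_finite fun i =>
    (continuous_apply (i.1)).isOpen_preimage _ (isOpen_discrete _)

lemma cyl_anti {p q : List Bool} (h : p <+: q) : Cyl q ⊆ Cyl p := by
  obtain ⟨r, rfl⟩ := h
  intro y hy i hi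
  rw [hy i (by simp; omega), List.getD_append _ _ _ _ hi]

lemma cylinder_mem_nhds {P : Set Dc} (hP : IsOpen P) {z : Dc} (hz : z ∈ P) :
    ∃ K, ∀ y : Dc, (∀ i < K, y i = z i) → y ∈ P := by
  rw [isOpen_pi_iff] at hP
  obtain ⟨I, u, hu, hsub⟩ := hP z hz
  rcases I.eq_empty_or_nonempty with rfl | hne
  · exact ⟨0, fun y _ => hsub (by simp)⟩
  · refine ⟨(I.max' hne) + 1, fun y hy => hsub ?_⟩
    intro i hi
    rw [hy i (Nat.lt_succ_of_le (I.le_max' i hi))]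
    exact (hu i hi).2

lemma mem_cyl_ofFn {z y : Dc} {m : ℕ} :
    y ∈ Cyl (List.ofFn fun i : Fin m => z i) ↔ ∀ i < m, y i = z i := by
  constructor
  · intro h i hi
    have := h i (by simpa using hi)
    simpa [List.getD_eq_getElem?_getD, List.getElem?_ofFn, List.ofFnNthVal, hi] using this
  · intro h i hi
    simp only [List.length_ofFn] at hi
    simp [List.getD_eq_getElem?_getD, List.getElem?_ofFn, List.ofFnNthVal, hi, h i hi]

lemma exists_cyl_avoid {N : Set Dc} (hNc : IsClosed N) (hNi : interior N = ∅)
    (p : List Bool) : ∃ q, p <+: q ∧ Cyl q ∩ N = ∅ := by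
  have hdense : Dense Nᶜ := by
    rwa [interior_eq_empty_iff_dense_compl] at hNi
  have hop : IsOpen (Cyl p) := isOpen_cyl p
  have hne : (Cyl p).Nonempty := ⟨fun i => p.getD i false, fun i _ => rfl⟩
  obtain ⟨z, hzc, hzp⟩ := hdense.exists_mem_open hop hne
  obtain ⟨K, hK⟩ := cylinder_mem_nhds (hNc.isOpen_compl) hzc
  refine ⟨List.ofFn fun i : Fin (p.length + K) => z i, ?_, ?_⟩
  · rw [List.prefix_iff_eq_take]
    apply List.ext_getElem (by simp)
    intro i h1 h2
    simp only [List.getElem_take, List.getElem_ofFn]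
    have := hzp i h1
    simp [List.getD_eq_getElem?_getD, h1] at this
    exact this.symm
  · rw [Set.eq_empty_iff_forall_notMem]
    rintro y ⟨hy, hyN⟩
    rw [mem_cyl_ofFn] at hy
    exact hK y (fun i hi => hy i (by omega)) hyN

end Cantor

namespace CantorEmb

def pref (x : Dc) (n : ℕ) : List Bool := List.ofFn fun i : Fin n => x i

def Epre (σ : List Bool → List Bool) (x : Dc) : ℕ → List Bool
  | 0 => []
  | n+1 => Epre σ x n ++ σ (pref x n) ++ [x n]

noncomputable def EE (σ : List Bool → List Bool) (x : Dc) : Dc :=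
  fun k => (Epre σ x (k+1)).getD k false

lemma epre_prefix (σ) (x : Dc) {n m : ℕ} (h : n ≤ m) : Epre σ x n <+: Epre σ x m := by
  induction m with
  | zero => simpa [Nat.le_zero.1 h] using List.prefix_refl _
  | succ m ih =>
    rcases Nat.lt_succ_iff_lt_or_eq.1 (Nat.lt_succ_of_le h) with h' | rfl
    · exact (ih (Nat.lt_succ_iff.1 h')).trans
        ⟨σ (pref x m) ++ [x m], by simp [Epre]⟩
    · exact List.prefix_refl _

lemma epre_len (σ) (x : Dc) (n : ℕ) : n ≤ (Epre σ x n).length := by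
  induction n with
  | zero => simp
  | succ n ih => simp [Epre]; omega

lemma getD_of_prefix {p q : List Bool} (h : p <+: q) {k : ℕ} (hk : k < p.length) :
    q.getD k false = p.getD k false := by
  obtain ⟨r, rfl⟩ := h
  rw [List.getD_append _ _ _ _ hk]

lemma ee_eq (σ) (x : Dc) {n k : ℕ} (hk : k < (Epre σ x n).length) :
    EE σ x k = (Epre σ x n).getD k false := by
  have h1 : k < (Epre σ x (k+1)).length := lt_of_lt_of_le (Nat.lt_succ_self k) (epre_len σ x (k+1))
  rcases le_total n (k+1) with h | h
  · rw [EE, getD_of_prefix (epre_prefix σ x h) hk]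
  · rw [EE, (getD_of_prefix (epre_prefix σ x h) h1).symm]

lemma pref_congr {x y : Dc} {n : ℕ} (h : ∀ i < n, x i = y i) : pref x n = pref y n := by
  unfold pref
  congr 1
  funext i
  exact h i i.2

lemma epre_congr (σ) {x y : Dc} {n : ℕ} (h : ∀ i < n, x i = y i) :
    Epre σ x n = Epre σ y n := by
  induction n with
  | zero => rfl
  | succ n ih =>
    have h' : ∀ i < n, x i = y i := fun i hi => h i (Nat.lt_succ_of_lt hi)
    simp only [Epre, ih h', pref_congr h', h n (Nat.lt_succ_self n)]

lemma epre_congr_sigma {σ σ' : List Bool → List Bool} {x : Dc} {n : ℕ}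
    (h : ∀ m < n, σ (pref x m) = σ' (pref x m)) : Epre σ x n = Epre σ' x n := by
  induction n with
  | zero => rfl
  | succ n ih =>
    simp only [Epre, ih (fun m hm => h m (Nat.lt_succ_of_lt hm)), h n (Nat.lt_succ_self n)]

lemma continuous_EE (σ) : Continuous (EE σ) := by
  apply continuous_pi
  intro k
  rw [continuous_iff_continuousAt]
  intro x
  apply Filter.EventuallyEq.continuousAt (y := EE σ x k)
  have hV : IsOpen {y : Dc | ∀ i < k + 1, y i = x i} := by
    have h : {y : Dc | ∀ i < k + 1, y i = x i}
        = ⋂ i : Fin (k+1), (fun y : Dc => y i.1) ⁻¹' {x i.1} := by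
      ext y
      simp only [Set.mem_setOf_eq, Set.mem_iInter, Set.mem_preimage, Set.mem_singleton_iff]
      exact ⟨fun h i => h i.1 i.2, fun h i hi => h ⟨i, hi⟩⟩
    rw [h]
    exact isOpen_iInter_of_finite fun i =>
      (continuous_apply (i.1)).isOpen_preimage _ (isOpen_discrete _)
  filter_upwards [hV.mem_nhds (fun i _ => rfl)] with y hy
  show EE σ y k = EE σ x k
  rw [EE, EE, epre_congr σ hy]

lemma injective_EE (σ) : Function.Injective (EE σ) := by
  intro x y hxy
  by_contra hne
  have hex : ∃ n, x n ≠ y n := by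
    by_contra h
    push_neg at h
    exact hne (funext h)
  set n := Nat.find hex with hn
  have hlt : ∀ i < n, x i = y i := fun i hi => not_not.1 (Nat.find_min hex hi)
  have hxn : x n ≠ y n := Nat.find_spec hex
  set A := Epre σ x n ++ σ (pref x n) with hA
  have hx1 : Epre σ x (n+1) = A ++ [x n] := by simp [Epre, hA]
  have hy1 : Epre σ y (n+1) = A ++ [y n] := by
    simp only [Epre, hA, ← epre_congr σ hlt, ← pref_congr hlt]
  have hkx : EE σ x A.length = x n := by
    rw [ee_eq σ x (n := n+1) (by rw [hx1]; simp), hx1,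
      List.getD_append_right _ _ _ _ (le_refl _)]
    simp
  have hky : EE σ y A.length = y n := by
    rw [ee_eq σ y (n := n+1) (by rw [hy1]; simp), hy1,
      List.getD_append_right _ _ _ _ (le_refl _)]
    simp
  rw [hxy] at hkx
  exact hxn (hkx ▸ hky ▸ rfl)

lemma mem_cyl_epre (σ) (x : Dc) (n : ℕ) : EE σ x ∈ Cyl (Epre σ x n) :=
  fun k hk => ee_eq σ x hk



noncomputable def stopIdx (y : Dc) (i : ℕ) : ℕ :=
  sInf {m | y (Nat.pair i (2*m)) = true}

noncomputable def decodeP (y : Dc) (t : List Bool) : List Bool :=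
  List.ofFn fun k : Fin (stopIdx y (Encodable.encode t)) =>
    y (Nat.pair (Encodable.encode t) (2*k+1))

lemma decode_agree {y yh : Dc} {K' : ℕ} (hagree : ∀ j < K', y j = yh j) (t : List Bool)
    (hstop : {m | yh (Nat.pair (Encodable.encode t) (2*m)) = true}.Nonempty)
    (hlt : Nat.pair (Encodable.encode t) (2 * stopIdx yh (Encodable.encode t)) < K') :
    decodeP y t = decodeP yh t := by
  set i := Encodable.encode t with hi
  set m₀ := stopIdx yh i with hm
  have hm₀ : yh (Nat.pair i (2*m₀)) = true := Nat.sInf_mem hstop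
  have hslot : ∀ n ≤ 2 * m₀, y (Nat.pair i n) = yh (Nat.pair i n) := by
    intro n hn
    apply hagree
    rcases eq_or_lt_of_le hn with rfl | hn'
    · exact hlt
    · exact lt_trans (Nat.pair_lt_pair_right i hn') hlt
  have hstopy : {m | y (Nat.pair i (2*m)) = true}.Nonempty :=
    ⟨m₀, by rw [Set.mem_setOf_eq, hslot _ (le_refl _)]; exact hm₀⟩
  have hsty : stopIdx y i = m₀ := by
    apply le_antisymm
    · exact Nat.sInf_le (by rw [Set.mem_setOf_eq, hslot _ (le_refl _)]; exact hm₀)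
    · by_contra hc
      push_neg at hc
      have h1 : y (Nat.pair i (2 * stopIdx y i)) = true := Nat.sInf_mem hstopy
      rw [hslot _ (by omega)] at h1
      have h2 : m₀ ≤ stopIdx y i := Nat.sInf_le h1
      omega
  unfold decodeP
  rw [← hi, hsty, ← hm]
  congr 1
  funext k
  exact hslot _ (by omega)


def extT (t : List Bool) : Dc := fun i => t.getD i false

lemma pref_getD (x : Dc) (n : ℕ) {i : ℕ} (hi : i < n) : (pref x n).getD i false = x i := by
  simp [pref, List.getD_eq_getElem?_getD, List.getElem?_ofFn, List.ofFnNthVal, hi]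

lemma pref_length (x : Dc) (n : ℕ) : (pref x n).length = n := by simp [pref]

lemma ofFn_getD (l : List Bool) :
    (List.ofFn fun k : Fin l.length => l.getD k false) = l := by
  apply List.ext_getElem (by simp)
  intro i h1 h2
  simp [List.getD_eq_getElem?_getD, h2]

lemma decodeP_congr {y y' : Dc} (t : List Bool)
    (h : ∀ n, y (Nat.pair (Encodable.encode t) n) = y' (Nat.pair (Encodable.encode t) n)) :
    decodeP y t = decodeP y' t := by
  have hst : stopIdx y (Encodable.encode t) = stopIdx y' (Encodable.encode t) := by
    unfold stopIdx
    congr 1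
    ext m
    rw [Set.mem_setOf_eq, Set.mem_setOf_eq, h]
  unfold decodeP
  rw [hst]
  congr 1
  funext k
  rw [h]

lemma bad_nwd {N : Set Dc} (hNc : IsClosed N) (hNi : interior N = ∅) :
    IsNowhereDense {y : Dc | ∃ x, EE (decodeP y) x ∈ N} := by
  apply nwd_of_locally_avoidable
  intro P hP hPne
  obtain ⟨z, hz⟩ := hPne
  obtain ⟨K, hK⟩ := cylinder_mem_nhds hP hz
  have hTfin : {t : List Bool | Encodable.encode t < K}.Finite :=
    Set.Finite.preimage Encodable.encode_injective.injOn (Set.finite_Iio K)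
  set L := hTfin.toFinset.sup (fun t => t.length) + 1 with hL
  have hLbig : ∀ t : List Bool, t.length = L → K ≤ Encodable.encode t := by
    intro t ht
    by_contra h
    push_neg at h
    have h1 : t ∈ hTfin.toFinset := by simpa using h
    have h2 : t.length ≤ hTfin.toFinset.sup (fun t => t.length) :=
      Finset.le_sup (f := fun t : List Bool => t.length) h1
    omega
  set y₀ : Dc := fun j => if j < K then z j else decide (Even (Nat.unpair j).2) with hy₀
  set σ₀ := decodeP y₀ with hσ₀
  have hchoice : ∀ t : List Bool, ∃ q : List Bool,
      (Epre σ₀ (extT t) L) <+: q ∧ Cyl q ∩ N = ∅ :=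
    fun t => exists_cyl_avoid hNc hNi _
  choose q hq1 hq2 using hchoice
  set s : List Bool → List Bool := fun t => (q t).drop (Epre σ₀ (extT t) L).length with hs
  have hps : ∀ t, Epre σ₀ (extT t) L ++ s t = q t := by
    intro t
    obtain ⟨r, hr⟩ := hq1 t
    rw [hs]
    simp only
    rw [← hr, List.drop_left]
  set yh : Dc := fun j =>
    if j < K then z j else
      match Encodable.decode (α := List Bool) (Nat.unpair j).1 with
      | some t =>
          if t.length = L then
            (if (Nat.unpair j).2 % 2 = 0 then decide ((Nat.unpair j).2 / 2 = (s t).length)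
             else (s t).getD ((Nat.unpair j).2 / 2) false)
          else decide (Even (Nat.unpair j).2)
      | none => decide (Even (Nat.unpair j).2) with hyh
  have hyhz : ∀ j < K, yh j = z j := by
    intro j hj
    rw [hyh]
    simp [hj]
  have hyhfront : ∀ t : List Bool, t.length = L → ∀ n, yh (Nat.pair (Encodable.encode t) n)
      = (if n % 2 = 0 then decide (n / 2 = (s t).length) else (s t).getD (n / 2) false) := by
    intro t ht n
    have hge : ¬ (Nat.pair (Encodable.encode t) n < K) := by
      have := Nat.left_le_pair (Encodable.encode t) n
      have := hLbig t ht
      omega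
    rw [hyh]
    simp [hge, Encodable.encodek, ht]
  have hyhnonfront : ∀ t : List Bool, t.length ≠ L → ∀ n,
      yh (Nat.pair (Encodable.encode t) n) = y₀ (Nat.pair (Encodable.encode t) n) := by
    intro t ht n
    by_cases hj : Nat.pair (Encodable.encode t) n < K
    · rw [hyh, hy₀]
      simp [hj]
    · rw [hyh, hy₀]
      simp [hj, Encodable.encodek, ht]
  have hstopall : ∀ t : List Bool, t.length ≤ L →
      {m | yh (Nat.pair (Encodable.encode t) (2*m)) = true}.Nonempty := by
    intro t ht
    rcases eq_or_lt_of_le ht with heq | hlt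
    · refine ⟨(s t).length, ?_⟩
      rw [Set.mem_setOf_eq, hyhfront t heq]
      simp [Nat.mul_mod_right, Nat.mul_div_cancel_left _ (by norm_num : (0:ℕ) < 2)]
    · refine ⟨K, ?_⟩
      rw [Set.mem_setOf_eq, hyhnonfront t (by omega), hy₀]
      have hge : ¬ (Nat.pair (Encodable.encode t) (2*K) < K) := by
        have := Nat.right_le_pair (Encodable.encode t) (2*K)
        omega
      simp [hge, Nat.unpair_pair, even_two_mul]
  set K' := K + ((List.finite_length_le Bool L).toFinset.sup
      (fun t => Nat.pair (Encodable.encode t) (2 * stopIdx yh (Encodable.encode t)))) + 1 with hK'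
  have hKK' : K ≤ K' := by omega
  have hK'2 : ∀ t : List Bool, t.length ≤ L →
      Nat.pair (Encodable.encode t) (2 * stopIdx yh (Encodable.encode t)) < K' := by
    intro t ht
    have h1 : t ∈ (List.finite_length_le Bool L).toFinset := by
      rw [Set.Finite.mem_toFinset]
      exact ht
    have h2 : Nat.pair (Encodable.encode t) (2 * stopIdx yh (Encodable.encode t))
        ≤ (List.finite_length_le Bool L).toFinset.sup
          (fun t => Nat.pair (Encodable.encode t) (2 * stopIdx yh (Encodable.encode t))) :=
      Finset.le_sup
      (f := fun t : List Bool => Nat.pair (Encodable.encode t) (2 * stopIdx yh (Encodable.encode t))) h1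
    omega
  have hsig : ∀ t : List Bool, t.length ≠ L → decodeP yh t = σ₀ t := by
    intro t ht
    rw [hσ₀]
    exact decodeP_congr t (hyhnonfront t ht)
  have hfront : ∀ t : List Bool, t.length = L → decodeP yh t = s t := by
    intro t ht
    have hstset : {m | yh (Nat.pair (Encodable.encode t) (2*m)) = true} = {(s t).length} := by
      ext m
      rw [Set.mem_setOf_eq, hyhfront t ht]
      simp [Nat.mul_mod_right, Nat.mul_div_cancel_left _ (by norm_num : (0:ℕ) < 2)]
    have hst : stopIdx yh (Encodable.encode t) = (s t).length := by
      rw [stopIdx, hstset, csInf_singleton]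
    unfold decodeP
    rw [hst]
    have : ∀ k : Fin (s t).length, yh (Nat.pair (Encodable.encode t) (2*k+1)) = (s t).getD k false := by
      intro k
      rw [hyhfront t ht]
      have h1 : (2*(k:ℕ)+1) % 2 = 1 := by omega
      have h2 : (2*(k:ℕ)+1) / 2 = k := by omega
      simp [h1, h2]
    calc (List.ofFn fun k : Fin (s t).length => yh (Nat.pair (Encodable.encode t) (2*k+1)))
        = List.ofFn fun k : Fin (s t).length => (s t).getD k false := by
          congr 1; funext k; exact this k
      _ = s t := ofFn_getD (s t)
  -- the avoiding cylinder
  refine ⟨Cyl (List.ofFn fun i : Fin K' => yh i), ?_, isOpen_cyl _, ⟨yh, mem_cyl_ofFn.2 fun _ _ => rfl⟩, ?_⟩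
  · intro y hy
    rw [mem_cyl_ofFn] at hy
    exact hK y fun i hi => by rw [hy i (by omega), hyhz i hi]
  · rw [Set.eq_empty_iff_forall_notMem]
    rintro y ⟨hyV, x, hx⟩
    rw [mem_cyl_ofFn] at hyV
    have hdec : ∀ u : List Bool, u.length ≤ L → decodeP y u = decodeP yh u :=
      fun u hu => decode_agree hyV u (hstopall u hu) (hK'2 u hu)
    set t := pref x L with htdef
    have ht : t.length = L := pref_length x L
    have E2 : Epre (decodeP y) x L = Epre σ₀ x L := by
      apply epre_congr_sigma
      intro m hm
      rw [hdec _ (by rw [pref_length]; omega), hsig _ (by rw [pref_length]; omega)]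
    have E3 : Epre σ₀ x L = Epre σ₀ (extT t) L := by
      apply epre_congr
      intro i hi
      rw [extT, htdef, pref_getD x L hi]
    have E1 : Epre (decodeP y) x (L+1) = q t ++ [x L] := by
      have : Epre (decodeP y) x (L+1) = Epre (decodeP y) x L ++ (decodeP y) (pref x L) ++ [x L] := rfl
      rw [this, E2, E3, ← htdef, hdec t (le_of_eq ht), hfront t ht, ← hps t, List.append_assoc,
        ← List.append_assoc]
    have hmem : EE (decodeP y) x ∈ Cyl (q t) := by
      have h1 := mem_cyl_epre (decodeP y) x (L+1)
      rw [E1] at h1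
      exact cyl_anti ⟨[x L], rfl⟩ h1
    have : EE (decodeP y) x ∈ Cyl (q t) ∩ N := ⟨hmem, hx⟩
    rw [hq2 t] at this
    exact this


end CantorEmb
-- ## Real transfer
noncomputable def digitR (k : ℕ) (r : ℝ) : Bool := decide (⌊(2:ℝ)^(k+1) * r⌋ % 2 = 1)

noncomputable def hR (r : ℝ) : Dc := fun k => digitR k r

def Iv (L : ℕ) (j : ℤ) : Set ℝ := {r | (j:ℝ) ≤ 2^L * r ∧ 2^L * r < (j:ℝ)+1}

lemma mem_Iv_mid (L : ℕ) (j : ℤ) : ((j:ℝ) + 1/2)/2^L ∈ Iv L j := by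
  have h : (2:ℝ)^L ≠ 0 := by positivity
  constructor <;> (rw [mul_div_cancel₀ _ h]; norm_num)

lemma floor_le_on_Iv {L : ℕ} {j : ℤ} {a b : ℝ} (ha : a ∈ Iv L j) (hb : b ∈ Iv L j)
    {k : ℕ} (hk : k < L) : ⌊(2:ℝ)^(k+1) * a⌋ ≤ ⌊(2:ℝ)^(k+1) * b⌋ := by
  by_contra hc
  push_neg at hc
  set m := ⌊(2:ℝ)^(k+1) * a⌋ with hm
  have h1 : (m : ℝ) ≤ 2^(k+1) * a := Int.floor_le _
  have h2 : (2:ℝ)^(k+1) * b < m := by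
    have := Int.lt_floor_add_one ((2:ℝ)^(k+1) * b)
    have h3 : ⌊(2:ℝ)^(k+1) * b⌋ + 1 ≤ m := hc
    calc (2:ℝ)^(k+1) * b < ⌊(2:ℝ)^(k+1) * b⌋ + 1 := this
      _ ≤ m := by exact_mod_cast h3
  set s := L - (k+1) with hs
  have hL : L = (k+1) + s := by omega
  have hP : (2:ℝ)^L = 2^(k+1) * 2^s := by rw [hL, pow_add]
  have hs0 : (0:ℝ) < 2^s := by positivity
  -- j ≤ 2^L b = 2^s * (2^(k+1) b) < 2^s * m
  have h4 : (j:ℝ) < 2^s * m := by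
    calc (j:ℝ) ≤ 2^L * b := hb.1
      _ = 2^s * ((2:ℝ)^(k+1) * b) := by rw [hP]; ring
      _ < 2^s * m := by exact mul_lt_mul_of_pos_left h2 hs0
  -- 2^s * m ≤ 2^L * a < j + 1
  have h5 : (2:ℝ)^s * m < (j:ℝ) + 1 := by
    calc (2:ℝ)^s * m ≤ 2^s * ((2:ℝ)^(k+1) * a) := by exact mul_le_mul_of_nonneg_left h1 (le_of_lt hs0)
      _ = 2^L * a := by rw [hP]; ring
      _ < (j:ℝ) + 1 := ha.2
  have h6 : ((2^s * m : ℤ) : ℝ) = (2:ℝ)^s * m := by push_cast; ring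
  have h7 : (j:ℤ) < 2^s * m := by exact_mod_cast h6 ▸ h4
  have h8 : (2^s * m : ℤ) < j + 1 := by exact_mod_cast h6 ▸ h5
  omega

lemma digit_const_on_Iv {L : ℕ} {j : ℤ} {a b : ℝ} (ha : a ∈ Iv L j) (hb : b ∈ Iv L j)
    {k : ℕ} (hk : k < L) : digitR k a = digitR k b := by
  unfold digitR
  rw [le_antisymm (floor_le_on_Iv ha hb hk) (floor_le_on_Iv hb ha hk)]

lemma Iv_subdiv {L : ℕ} {j : ℤ} (c : ℤ) (hc : c = 0 ∨ c = 1) : Iv (L+1) (2*j+c) ⊆ Iv L j := by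
  intro r hr
  obtain ⟨h1, h2⟩ := hr
  have hp : (2:ℝ)^(L+1) = 2 * 2^L := by rw [pow_succ]; ring
  rw [hp] at h1 h2
  push_cast at h1 h2
  constructor
  · rcases hc with rfl | rfl <;> push_cast at h1 ⊢ <;> linarith
  · rcases hc with rfl | rfl <;> push_cast at h2 ⊢ <;> linarith

lemma digit_top {L : ℕ} {i : ℤ} {r : ℝ} (hr : r ∈ Iv (L+1) i) :
    digitR L r = decide (i % 2 = 1) := by
  unfold digitR
  have h : ⌊(2:ℝ)^(L+1) * r⌋ = i := by
    rw [Int.floor_eq_iff]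
    exact ⟨hr.1, hr.2⟩
  rw [h]

lemma refine_digits (p : List Bool) (L : ℕ) (j : ℤ) :
    ∃ j' : ℤ, Iv (L + p.length) j' ⊆ Iv L j ∧
      ∀ r ∈ Iv (L + p.length) j', ∀ i < p.length, digitR (L + i) r = p.getD i false := by
  induction p generalizing L j with
  | nil => exact ⟨j, by simpa using subset_rfl, by simp⟩
  | cons b p ih =>
    obtain ⟨j', hsub, hdig⟩ := ih (L+1) (2*j + cond b 1 0)
    refine ⟨j', ?_, ?_⟩
    · have h1 : L + (b :: p).length = (L + 1) + p.length := by simp; omega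
      rw [h1]
      exact hsub.trans (Iv_subdiv _ (by cases b <;> simp))
    · intro r hr i hi
      have h1 : L + (b :: p).length = (L + 1) + p.length := by simp; omega
      rw [h1] at hr
      rcases Nat.eq_zero_or_pos i with rfl | hipos
      · have hr0 : r ∈ Iv (L+1) (2*j + cond b 1 0) := hsub hr
        rw [Nat.add_zero, digit_top hr0]
        cases b <;> simp <;> omega
      · obtain ⟨i', rfl⟩ := Nat.exists_eq_add_of_le hipos
        have : L + (1 + i') = (L + 1) + i' := by omega
        rw [this, hdig r hr i' (by simp at hi; omega), show 1 + i' = i' + 1 by omega]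
        simp

def IvO (L : ℕ) (j : ℤ) : Set ℝ := {r | (j:ℝ) < 2^L * r ∧ 2^L * r < (j:ℝ)+1}

lemma IvO_subset (L : ℕ) (j : ℤ) : IvO L j ⊆ Iv L j := fun r hr => ⟨le_of_lt hr.1, hr.2⟩

lemma isOpen_IvO (L : ℕ) (j : ℤ) : IsOpen (IvO L j) := by
  have h : IvO L j = (fun r : ℝ => 2^L * r) ⁻¹' (Set.Ioo (j:ℝ) ((j:ℝ)+1)) := rfl
  rw [h]
  exact (continuous_const.mul continuous_id).isOpen_preimage _ isOpen_Ioo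

lemma IvO_nonempty (L : ℕ) (j : ℤ) : (IvO L j).Nonempty := by
  refine ⟨((j:ℝ) + 1/2)/2^L, ?_, ?_⟩ <;>
    (rw [mul_div_cancel₀ _ (by positivity : (2:ℝ)^L ≠ 0)]; norm_num)

lemma exists_Iv_subset {U : Set ℝ} (hU : IsOpen U) (hne : U.Nonempty) :
    ∃ L j, Iv L j ⊆ U := by
  obtain ⟨c, hc⟩ := hne
  obtain ⟨ε, hε, hball⟩ := Metric.isOpen_iff.1 hU c hc
  obtain ⟨L, hL⟩ : ∃ L : ℕ, (1/2 : ℝ)^L < ε := exists_pow_lt_of_lt_one hε (by norm_num)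
  refine ⟨L, ⌊(2:ℝ)^L * c⌋, fun r hr => hball ?_⟩
  have h1 : ((⌊(2:ℝ)^L * c⌋ : ℝ)) ≤ 2^L * c := Int.floor_le _
  have h2 : (2:ℝ)^L * c < ⌊(2:ℝ)^L * c⌋ + 1 := Int.lt_floor_add_one _
  have hp : (0:ℝ) < 2^L := by positivity
  rw [Metric.mem_ball, Real.dist_eq]
  have h3 : |2^L * r - 2^L * c| < 1 := by
    rw [abs_lt]
    constructor <;> [linarith [hr.1]; linarith [hr.2]]
  rw [← mul_sub, abs_lt] at h3
  have h4 : |r - c| < 1/2^L := by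
    rw [abs_lt]
    constructor
    · rw [neg_lt, lt_div_iff₀ hp]
      nlinarith [h3.1]
    · rw [lt_div_iff₀ hp]
      nlinarith [h3.2]
  calc |r - c| < 1/2^L := h4
    _ = (1/2:ℝ)^L := by rw [div_pow, one_pow]
    _ < ε := hL

lemma preimage_hR_nwd {M : Set Dc} (hcl : IsClosed M) (hint : interior M = ∅) :
    IsNowhereDense (hR ⁻¹' M) := by
  apply nwd_of_locally_avoidable
  intro U hU hne
  obtain ⟨L, j, hIv⟩ := exists_Iv_subset hU hne
  set r₀ : ℝ := ((j:ℝ) + 1/2)/2^L with hr₀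
  have hr₀m : r₀ ∈ Iv L j := mem_Iv_mid L j
  set π : List Bool := List.ofFn fun k : Fin L => digitR k r₀ with hπ
  obtain ⟨q, hpre, havoid⟩ := exists_cyl_avoid hcl hint π
  obtain ⟨tail, rfl⟩ := hpre
  obtain ⟨j', hsub, hdig⟩ := refine_digits tail L j
  refine ⟨IvO (L + tail.length) j', ?_, isOpen_IvO _ _, IvO_nonempty _ _, ?_⟩
  · exact (IvO_subset _ _).trans (hsub.trans ((fun r hr => hIv hr)))
  · rw [Set.eq_empty_iff_forall_notMem]
    rintro r ⟨hrV, hrM⟩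
    have hrIv : r ∈ Iv (L + tail.length) j' := IvO_subset _ _ hrV
    have hrIvL : r ∈ Iv L j := hsub hrIv
    have hcylmem : hR r ∈ Cyl (π ++ tail) := by
      intro i hi
      simp only [List.length_append, List.length_ofFn, hπ] at hi
      by_cases hiL : i < L
      · rw [List.getD_append _ _ _ _ (by simp [hπ, hiL])]
        have : digitR i r = digitR i r₀ := digit_const_on_Iv hrIvL hr₀m hiL
        rw [show hR r i = digitR i r from rfl, this, hπ]
        simp [List.getD_eq_getElem?_getD, List.getElem?_ofFn, List.ofFnNthVal, hiL]
      · push_neg at hiL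
        obtain ⟨i'', rfl⟩ := Nat.exists_eq_add_of_le hiL
        rw [List.getD_append_right _ _ _ _ (by simp [hπ])]
        have hlen : (L + i'') - π.length = i'' := by simp [hπ]
        rw [hlen]
        exact hdig r hrIv i'' (by omega)
    have : hR r ∈ Cyl (π ++ tail) ∩ M := ⟨hcylmem, hrM⟩
    rw [havoid] at this
    exact this

lemma covMeager_le_of_cover {ι : Type} (M : ι → Set Dc) (hcl : ∀ i, IsClosed (M i))
    (hint : ∀ i, interior (M i) = ∅) (hcov : (⋃ i, M i) = Set.univ) :
    covMeager ≤ Cardinal.mk ι := by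
  apply csInf_le'
  refine ⟨ι, fun i => hR ⁻¹' M i, rfl, fun i => (preimage_hR_nwd (hcl i) (hint i)).isMeagre', ?_⟩
  rw [Set.eq_univ_iff_forall]
  intro r
  have : hR r ∈ ⋃ i, M i := hcov ▸ Set.mem_univ _
  obtain ⟨s, ⟨i, rfl⟩, hmem⟩ := this
  exact Set.mem_iUnion.2 ⟨i, hmem⟩

lemma aleph0_le_covMeager : Cardinal.aleph0 ≤ covMeager := by
  apply le_csInf
  · refine ⟨Cardinal.mk ℝ, ℝ, fun r => {r}, rfl, fun r => ?_, by simp [Set.iUnion_of_singleton]⟩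
    have h1 : IsNowhereDense ({r} : Set ℝ) :=
      (IsClosed.isNowhereDense_iff isClosed_singleton).2 (interior_singleton r)
    exact h1.isMeagre'
  · rintro b ⟨ι, E, rfl, hm, hc⟩
    by_contra h
    push_neg at h
    have hfin : Finite ι := Cardinal.lt_aleph0_iff_finite.1 h
    have hcount : Countable ι := Finite.to_countable
    have hres : (⋂ i, (E i)ᶜ) ∈ residual ℝ := countable_iInter_mem.2 hm
    rw [← Set.compl_iUnion, hc, Set.compl_univ] at hres
    have hdense := dense_of_mem_residual hres
    exact Set.not_nonempty_empty hdense.nonempty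

-- ## The X side
section Xside
open CantorEmb

variable {X : Type} [TopologicalSpace X] [CompactSpace X] [T2Space X]

variable (C : Set X) (hC : Perfect C) (hCne : C.Nonempty)

noncomputable def subNode (A : {A : Set X // Perfect A ∧ A.Nonempty}) (b : Bool) :
    {A : Set X // Perfect A ∧ A.Nonempty} :=
  if b then ⟨(A.2.1.splitting A.2.2).choose_spec.choose,
      (A.2.1.splitting A.2.2).choose_spec.choose_spec.2.1.1,
      (A.2.1.splitting A.2.2).choose_spec.choose_spec.2.1.2.1⟩
  else ⟨(A.2.1.splitting A.2.2).choose,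
      (A.2.1.splitting A.2.2).choose_spec.choose_spec.1.1,
      (A.2.1.splitting A.2.2).choose_spec.choose_spec.1.2.1⟩

lemma subNode_subset (A : {A : Set X // Perfect A ∧ A.Nonempty}) (b : Bool) :
    (subNode A b).1 ⊆ A.1 := by
  cases b
  · simpa [subNode] using (A.2.1.splitting A.2.2).choose_spec.choose_spec.1.2.2
  · simpa [subNode] using (A.2.1.splitting A.2.2).choose_spec.choose_spec.2.1.2.2

lemma subNode_disjoint (A : {A : Set X // Perfect A ∧ A.Nonempty}) :
    Disjoint (subNode A false).1 (subNode A true).1 := by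
  simpa [subNode] using (A.2.1.splitting A.2.2).choose_spec.choose_spec.2.2

noncomputable def scheme : List Bool → {A : Set X // Perfect A ∧ A.Nonempty}
  | [] => ⟨C, hC, hCne⟩
  | b :: s => subNode (scheme s) b

lemma scheme_cons_subset (b : Bool) (s : List Bool) :
    (scheme C hC hCne (b :: s)).1 ⊆ (scheme C hC hCne s).1 :=
  subNode_subset _ b

lemma scheme_disjoint : ∀ {s t : List Bool}, s.length = t.length → s ≠ t →
    Disjoint (scheme C hC hCne s).1 (scheme C hC hCne t).1 := by
  intro s
  induction s with
  | nil =>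
    intro t hlen hne
    cases t with
    | nil => exact absurd rfl hne
    | cons c t => simp at hlen
  | cons b s ih =>
    intro t hlen hne
    cases t with
    | nil => simp at hlen
    | cons c t =>
      simp only [List.length_cons, Nat.add_right_cancel_iff] at hlen
      by_cases hst : s = t
      · subst hst
        have hbc : b ≠ c := fun h => hne (by rw [h])
        cases b <;> cases c <;> try exact absurd rfl hbc
        · exact subNode_disjoint (scheme C hC hCne s)
        · exact (subNode_disjoint (scheme C hC hCne s)).symm
      · exact ((ih hlen hst).mono (scheme_cons_subset C hC hCne b s)
          (scheme_cons_subset C hC hCne c t))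

end Xside

section Xside2
open CantorEmb

variable {X : Type} [TopologicalSpace X] [CompactSpace X] [T2Space X]
variable (C : Set X) (hC : Perfect C) (hCne : C.Nonempty)

def node (x : Dc) : ℕ → List Bool
  | 0 => []
  | n+1 => x n :: node x n

lemma node_length (x : Dc) (n : ℕ) : (node x n).length = n := by
  induction n with
  | zero => rfl
  | succ n ih => simp [node, ih]

open Classical in
noncomputable def branchL (p : X) : ℕ → List Bool
  | 0 => []
  | n+1 => (if p ∈ (scheme C hC hCne (true :: branchL p n)).1 then true else false)
      :: branchL p n

noncomputable def fX (p : X) : Dc := fun n => (branchL C hC hCne p (n+1)).headI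

lemma branchL_succ (p : X) (n : ℕ) :
    branchL C hC hCne p (n+1) = fX C hC hCne p n :: branchL C hC hCne p n := rfl

lemma branchL_length (p : X) (n : ℕ) : (branchL C hC hCne p n).length = n := by
  induction n with
  | zero => rfl
  | succ n ih => rw [branchL_succ]; simp [ih]

def Fset : Set X := {p | ∀ n, ∃ s : List Bool, s.length = n ∧ p ∈ (scheme C hC hCne s).1}

lemma branch_unique {p : X} (n : ℕ) :
    ∀ s : List Bool, s.length = n → p ∈ (scheme C hC hCne s).1 →
      s = branchL C hC hCne p n := by
  induction n with
  | zero =>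
    intro s hlen _
    rw [List.length_eq_zero_iff] at hlen
    rw [hlen]; rfl
  | succ n ih =>
    intro s hlen hmem
    cases s with
    | nil => simp at hlen
    | cons b s' =>
      simp only [List.length_cons, Nat.add_right_cancel_iff] at hlen
      have hs' : s' = branchL C hC hCne p n :=
        ih s' hlen (scheme_cons_subset C hC hCne b s' hmem)
      subst hs'
      cases b
      · have hnot : p ∉ (scheme C hC hCne (true :: branchL C hC hCne p n)).1 := by
          intro h
          exact Set.disjoint_left.1
            (scheme_disjoint C hC hCne (s := false :: branchL C hC hCne p n)
              (t := true :: branchL C hC hCne p n) (by simp) (by simp)) hmem h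
        show _ = branchL C hC hCne p (n+1)
        rw [branchL]
        simp [hnot]
      · show _ = branchL C hC hCne p (n+1)
        rw [branchL]
        simp [hmem]

lemma mem_scheme_branch {p : X} (hp : p ∈ Fset C hC hCne) (n : ℕ) :
    p ∈ (scheme C hC hCne (branchL C hC hCne p n)).1 := by
  obtain ⟨s, hlen, hmem⟩ := hp n
  rwa [branch_unique C hC hCne n s hlen hmem] at hmem

lemma fX_surj (x : Dc) : ∃ p ∈ Fset C hC hCne, fX C hC hCne p = x := by
  set t : ℕ → Set X := fun n => (scheme C hC hCne (node x n)).1 with ht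
  have htsub : ∀ n, t (n+1) ⊆ t n := fun n => scheme_cons_subset C hC hCne (x n) (node x n)
  have htne : ∀ n, (t n).Nonempty := fun n => (scheme C hC hCne (node x n)).2.2
  have htcl : ∀ n, IsClosed (t n) := fun n => (scheme C hC hCne (node x n)).2.1.closed
  obtain ⟨p, hp⟩ := IsCompact.nonempty_iInter_of_sequence_nonempty_isCompact_isClosed
    t htsub htne ((htcl 0).isCompact) htcl
  rw [Set.mem_iInter] at hp
  have hpF : p ∈ Fset C hC hCne := fun n => ⟨node x n, node_length x n, hp n⟩
  refine ⟨p, hpF, ?_⟩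
  funext n
  have hb : ∀ m, branchL C hC hCne p m = node x m :=
    fun m => (branch_unique C hC hCne m (node x m) (node_length x m) (hp m)).symm
  show (branchL C hC hCne p (n+1)).headI = x n
  rw [hb (n+1)]
  rfl

lemma isClosed_Fset : IsClosed (Fset C hC hCne) := by
  have heq : Fset C hC hCne
      = ⋂ n, ⋃ s ∈ {s : List Bool | s.length = n}, (scheme C hC hCne s).1 := by
    ext p
    simp [Fset, Set.mem_iInter]
  rw [heq]
  refine isClosed_iInter fun n => Set.Finite.isClosed_biUnion ?_ ?_
  · exact (List.finite_length_le Bool n).subset fun s hs => le_of_eq hs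
  · exact fun s _ => (scheme C hC hCne s).2.1.closed

lemma fX_contOn : ContinuousOn (fX C hC hCne) (Fset C hC hCne) := by
  rw [continuousOn_iff_continuous_restrict]
  apply continuous_pi
  intro n
  rw [continuous_iff_continuousAt]
  intro p₀
  set s := branchL C hC hCne p₀.1 (n+1) with hs
  set Ubad := ⋃ u ∈ {u : List Bool | u.length = n+1 ∧ u ≠ s}, (scheme C hC hCne u).1 with hU
  have hUcl : IsClosed Ubad := by
    refine Set.Finite.isClosed_biUnion ?_ fun u _ => (scheme C hC hCne u).2.1.closed
    exact (List.finite_length_le Bool (n+1)).subset fun u hu => le_of_eq hu.1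
  have hp₀ : p₀.1 ∉ Ubad := by
    intro h
    rw [hU, Set.mem_iUnion₂] at h
    obtain ⟨u, ⟨hulen, hune⟩, humem⟩ := h
    exact Set.disjoint_left.1
      (scheme_disjoint C hC hCne (by rw [hulen, hs, branchL_length]) hune) humem
      (mem_scheme_branch C hC hCne p₀.2 (n+1))
  have hVnhds : (Subtype.val ⁻¹' Ubadᶜ : Set (Fset C hC hCne)) ∈ nhds p₀ :=
    (hUcl.isOpen_compl.preimage continuous_subtype_val).mem_nhds hp₀
  apply Filter.EventuallyEq.continuousAt
    (y := (Fset C hC hCne).restrict (fX C hC hCne) p₀ n)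
  filter_upwards [hVnhds] with p hp
  have hbr : branchL C hC hCne p.1 (n+1) = s := by
    by_contra hne
    apply hp
    rw [hU, Set.mem_iUnion₂]
    exact ⟨branchL C hC hCne p.1 (n+1), ⟨branchL_length C hC hCne p.1 (n+1), hne⟩,
      mem_scheme_branch C hC hCne p.2 (n+1)⟩
  show (branchL C hC hCne p.1 (n+1)).headI = (branchL C hC hCne p₀.1 (n+1)).headI
  rw [hbr, hs]

end Xside2

section MinSurj
variable {X : Type} [TopologicalSpace X] [CompactSpace X] [T2Space X]
variable {Y : Type} [TopologicalSpace Y] [T2Space Y]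

lemma exists_min_closed_onto {f : X → Y} {F' : Set X} (hFcl : IsClosed F')
    (hcont : ContinuousOn f F') (hsurj : f '' F' = Set.univ) :
    ∃ G, G ⊆ F' ∧ IsClosed G ∧ f '' G = Set.univ ∧
      (∀ E, E ⊆ G → IsClosed E → f '' E = Set.univ → G ⊆ E) := by
  set S : Set (Set X) := {E | E ⊆ F' ∧ IsClosed E ∧ f '' E = Set.univ} with hS
  have hFS : F' ∈ S := ⟨subset_rfl, hFcl, hsurj⟩
  have hbound : ∀ c ⊆ S, IsChain (· ⊆ ·) c → c.Nonempty → ∃ lb ∈ S, ∀ s ∈ c, lb ⊆ s := by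
    intro c hcS hchain hcne
    obtain ⟨E₀, hE₀⟩ := hcne
    refine ⟨⋂₀ c, ⟨?_, ?_, ?_⟩, fun E hE => Set.sInter_subset_of_mem hE⟩
    · exact (Set.sInter_subset_of_mem hE₀).trans (hcS hE₀).1
    · exact isClosed_sInter fun E hE => (hcS hE).2.1
    · rw [Set.eq_univ_iff_forall]
      intro y
      haveI : Nonempty c := ⟨⟨E₀, hE₀⟩⟩
      set t : c → Set X := fun E => E.1 ∩ (F' ∩ f ⁻¹' {y}) with ht
      have hycl : IsClosed (F' ∩ f ⁻¹' {y}) :=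
        hcont.preimage_isClosed_of_isClosed hFcl isClosed_singleton
      have htd : Directed (· ⊇ ·) t := by
        intro E E'
        rcases hchain.total E.2 E'.2 with h | h
        · exact ⟨E, subset_rfl, Set.inter_subset_inter_left _ h⟩
        · exact ⟨E', Set.inter_subset_inter_left _ h, subset_rfl⟩
      have htne : ∀ E : c, (t E).Nonempty := by
        intro E
        have himg : f '' E.1 = Set.univ := (hcS E.2).2.2
        have : y ∈ f '' E.1 := himg ▸ Set.mem_univ y
        obtain ⟨p, hpE, hpy⟩ := this
        exact ⟨p, hpE, (hcS E.2).1 hpE, by simp [hpy]⟩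
      have htcl : ∀ E : c, IsClosed (t E) := fun E => ((hcS E.2).2.1).inter hycl
      obtain ⟨p, hp⟩ := IsCompact.nonempty_iInter_of_directed_nonempty_isCompact_isClosed
        t htd htne (fun E => (htcl E).isCompact) htcl
      rw [Set.mem_iInter] at hp
      refine (Set.mem_image _ _ _).2 ⟨p, ?_, ?_⟩
      · exact Set.mem_sInter.2 fun E hE => (hp ⟨E, hE⟩).1
      · have := (hp ⟨E₀, hE₀⟩).2.2
        simpa using this
  obtain ⟨G, hGF, hGmin⟩ := zorn_superset_nonempty S hbound F' hFS
  exact ⟨G, hGmin.1.1, hGmin.1.2.1, hGmin.1.2.2,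
    fun E hEG hEcl hEim => hGmin.2 ⟨hEG.trans hGmin.1.1, hEcl, hEim⟩ hEG⟩

lemma image_inter_nwd {f : X → Y} {F' G : Set X} (hcont : ContinuousOn f F') (hGF : G ⊆ F')
    (hGcl : IsClosed G) (hGsurj : f '' G = Set.univ)
    (hmin : ∀ E, E ⊆ G → IsClosed E → f '' E = Set.univ → G ⊆ E)
    {A B : Set X} (hA : IsClosed A) (hB : IsClosed B) (hAG : A ⊆ G) (hBG : B ⊆ G)
    (hAB : Disjoint A B) :
    IsClosed (f '' A ∩ f '' B) ∧ interior (f '' A ∩ f '' B) = ∅ := by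
  have hGcont : ContinuousOn f G := hcont.mono hGF
  obtain ⟨U, V, hUo, hVo, hAU, hBV, hUV⟩ :=
    SeparatedNhds.of_isCompact_isCompact hA.isCompact hB.isCompact hAB
  -- general claim
  have claim : ∀ W : Set X, IsOpen W → ∀ a ∈ G, a ∈ W → f a ∈ closure (f '' (G \ W))ᶜ := by
    intro W hWo a haG haW
    rw [mem_closure_iff]
    intro N hNo hfaN
    set E := G \ (W ∩ f ⁻¹' N) with hE
    have hEcl : IsClosed E := by
      have h1 : E = (G ∩ Wᶜ) ∪ (G ∩ f ⁻¹' Nᶜ) := by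
        rw [hE]; ext q; simp [Set.mem_diff]; tauto
      rw [h1]
      exact (hGcl.inter hWo.isClosed_compl).union
        (hGcont.preimage_isClosed_of_isClosed hGcl hNo.isClosed_compl)
    have hEne : f '' E ≠ Set.univ := by
      intro h
      have haE : a ∈ E := hmin E Set.diff_subset hEcl h haG
      exact haE.2 ⟨haW, hfaN⟩
    obtain ⟨z, hz⟩ := (Set.ne_univ_iff_exists_notMem _).1 hEne
    have hzG : z ∈ f '' G := hGsurj ▸ Set.mem_univ z
    obtain ⟨g, hgG, rfl⟩ := hzG
    have hgWN : g ∈ W ∩ f ⁻¹' N := by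
      by_contra h
      exact hz ⟨g, ⟨hgG, h⟩, rfl⟩
    refine ⟨f g, hgWN.2, ?_⟩
    intro hmem
    obtain ⟨g', hg', hfg'⟩ := hmem
    exact hz ⟨g', ⟨hg'.1, fun hc => hg'.2 hc.1⟩, hfg'⟩
  have hsub1 : f '' A ⊆ closure (f '' (G \ U))ᶜ := by
    rintro _ ⟨a, haA, rfl⟩
    exact claim U hUo a (hAG haA) (hAU haA)
  have hsub2 : f '' B ⊆ closure (f '' (G \ V))ᶜ := by
    rintro _ ⟨b, hbB, rfl⟩
    exact claim V hVo b (hBG hbB) (hBV hbB)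
  have hdisj : (f '' (G \ U))ᶜ ∩ (f '' (G \ V))ᶜ = ∅ := by
    rw [Set.eq_empty_iff_forall_notMem]
    rintro z ⟨hz1, hz2⟩
    have hzG : z ∈ f '' G := hGsurj ▸ Set.mem_univ z
    obtain ⟨g, hgG, rfl⟩ := hzG
    have hgU : g ∈ U := by
      by_contra h
      exact hz1 ⟨g, ⟨hgG, fun hc => h hc⟩, rfl⟩
    have hgV : g ∈ V := by
      by_contra h
      exact hz2 ⟨g, ⟨hgG, fun hc => h hc⟩, rfl⟩
    exact Set.disjoint_left.1 hUV hgU hgV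
  have hUstarOpen : IsOpen (f '' (G \ U))ᶜ := by
    have : IsCompact (f '' (G \ U)) :=
      (hGcl.isCompact.diff hUo).image_of_continuousOn (hGcont.mono Set.diff_subset)
    exact this.isClosed.isOpen_compl
  have hVstarOpen : IsOpen (f '' (G \ V))ᶜ := by
    have : IsCompact (f '' (G \ V)) :=
      (hGcl.isCompact.diff hVo).image_of_continuousOn (hGcont.mono Set.diff_subset)
    exact this.isClosed.isOpen_compl
  constructor
  · have h1 : IsCompact (f '' A) := hA.isCompact.image_of_continuousOn (hcont.mono (hAG.trans hGF))
    have h2 : IsCompact (f '' B) := hB.isCompact.image_of_continuousOn (hcont.mono (hBG.trans hGF))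
    exact h1.isClosed.inter h2.isClosed
  · rw [Set.eq_empty_iff_forall_notMem]
    intro x hx
    have hWsub : interior (f '' A ∩ f '' B) ⊆ closure (f '' (G \ U))ᶜ ∩ closure (f '' (G \ V))ᶜ :=
      interior_subset.trans (Set.inter_subset_inter hsub1 hsub2)
    have hWo : IsOpen (interior (f '' A ∩ f '' B)) := isOpen_interior
    have hx1 : x ∈ closure (f '' (G \ U))ᶜ := (hWsub hx).1
    obtain ⟨w, hw1, hw2⟩ := (mem_closure_iff.1 hx1) _ hWo hx
    have hw3 : w ∈ closure (f '' (G \ V))ᶜ := (hWsub hw1).2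
    obtain ⟨v, hv1, hv2⟩ := (mem_closure_iff.1 hw3) _ (hWo.inter hUstarOpen) ⟨hw1, hw2⟩
    have : v ∈ (f '' (G \ U))ᶜ ∩ (f '' (G \ V))ᶜ := ⟨hv1.2, hv2⟩
    rw [hdisj] at this
    exact this

lemma exists_basic_pair {B : Set (Set X)} (hB : TopologicalSpace.IsTopologicalBasis B)
    {a b : X} (hab : a ≠ b) :
    ∃ U ∈ B, ∃ V ∈ B, a ∈ U ∧ b ∈ V ∧ closure U ∩ closure V = ∅ := by
  obtain ⟨U₁, V₁, hU₁o, hV₁o, haU₁, hbV₁, hUV₁⟩ := t2_separation hab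
  obtain ⟨U₂, hU₂o, haU₂, hclU₂⟩ :=
    normal_exists_closure_subset isClosed_singleton hU₁o (Set.singleton_subset_iff.2 haU₁)
  obtain ⟨V₂, hV₂o, hbV₂, hclV₂⟩ :=
    normal_exists_closure_subset isClosed_singleton hV₁o (Set.singleton_subset_iff.2 hbV₁)
  obtain ⟨U, hUB, haU, hUsub⟩ := hB.exists_subset_of_mem_open
    (Set.singleton_subset_iff.1 haU₂) hU₂o
  obtain ⟨V, hVB, hbV, hVsub⟩ := hB.exists_subset_of_mem_open
    (Set.singleton_subset_iff.1 hbV₂) hV₂o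
  refine ⟨U, hUB, V, hVB, haU, hbV, ?_⟩
  rw [Set.eq_empty_iff_forall_notMem]
  rintro x ⟨hx1, hx2⟩
  have h1 : x ∈ U₁ := hclU₂ ((closure_mono hUsub) hx1)
  have h2 : x ∈ V₁ := hclV₂ ((closure_mono hVsub) hx2)
  exact Set.disjoint_left.1 hUV₁ h1 h2

end MinSurj

open CantorEmb in
/-- If X is compact Hausdorff, not scattered (i.e. it has a nonempty perfect
subset), and of weight less than cov(M) (i.e. it has an open base of size < cov(M)),
then X contains a copy of the Cantor set. -/
theorem stmt19 (X : Type) [TopologicalSpace X] [CompactSpace X] [T2Space X]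
    (hns : ∃ C : Set X, C.Nonempty ∧ Perfect C)
    (hw : ∃ B : Set (Set X), TopologicalSpace.IsTopologicalBasis B ∧
      Cardinal.mk B < covMeager) :
    HasCantorSubset (Set.univ : Set X) := by
  classical
  obtain ⟨C, hCne, hC⟩ := hns
  obtain ⟨B, hB, hBsize⟩ := hw
  have hFcl := isClosed_Fset C hC hCne
  have hcont := fX_contOn C hC hCne
  have hsurjF : fX C hC hCne '' Fset C hC hCne = Set.univ := by
    rw [Set.eq_univ_iff_forall]
    intro x
    obtain ⟨p, hpF, hfp⟩ := fX_surj C hC hCne x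
    exact ⟨p, hpF, hfp⟩
  obtain ⟨G, hGF, hGcl, hGsurj, hmin⟩ := exists_min_closed_onto hFcl hcont hsurjF
  set ι := {p : Set X × Set X // p.1 ∈ B ∧ p.2 ∈ B ∧ closure p.1 ∩ closure p.2 = ∅} with hι
  set N : ι → Set Dc := fun i =>
    (fX C hC hCne '' (closure i.1.1 ∩ G)) ∩ (fX C hC hCne '' (closure i.1.2 ∩ G)) with hN
  have hNprop : ∀ i : ι, IsClosed (N i) ∧ interior (N i) = ∅ := by
    intro i
    apply image_inter_nwd hcont hGF hGcl hGsurj hmin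
      (isClosed_closure.inter hGcl) (isClosed_closure.inter hGcl)
      Set.inter_subset_right Set.inter_subset_right
    rw [Set.disjoint_left]
    rintro p ⟨hp1, _⟩ ⟨hp2, _⟩
    have hmem : p ∈ closure i.1.1 ∩ closure i.1.2 := ⟨hp1, hp2⟩
    rw [i.2.2.2] at hmem
    exact hmem
  have hgood : ∃ y : Dc, ∀ i : ι, ∀ x : Dc, EE (decodeP y) x ∉ N i := by
    by_contra hbad
    push_neg at hbad
    have hcov : (⋃ i : ι, closure {y : Dc | ∃ x, EE (decodeP y) x ∈ N i}) = Set.univ := by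
      rw [Set.eq_univ_iff_forall]
      intro y
      obtain ⟨i, x, hix⟩ := hbad y
      exact Set.mem_iUnion.2 ⟨i, subset_closure ⟨x, hix⟩⟩
    have hle : covMeager ≤ Cardinal.mk ι :=
      covMeager_le_of_cover _ (fun i => isClosed_closure)
        (fun i => bad_nwd (hNprop i).1 (hNprop i).2) hcov
    have hinj : Function.Injective
        (fun i : ι => ((⟨i.1.1, i.2.1⟩, ⟨i.1.2, i.2.2.1⟩) : B × B)) := by
      intro i j hij
      simp only [Prod.mk.injEq, Subtype.mk.injEq] at hij
      exact Subtype.ext (Prod.ext hij.1 hij.2)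
    have h1 : Cardinal.mk ι ≤ Cardinal.mk (B × B) := Cardinal.mk_le_of_injective hinj
    have h2 : Cardinal.mk (↥B × ↥B) = Cardinal.mk B * Cardinal.mk B := by
      simp [Cardinal.mk_prod]
    have hlt : Cardinal.mk ι < covMeager := by
      calc Cardinal.mk ι ≤ Cardinal.mk B * Cardinal.mk B := h2 ▸ h1
        _ < covMeager := Cardinal.mul_lt_of_lt aleph0_le_covMeager hBsize hBsize
    exact absurd (hle.trans_lt hlt) (lt_irrefl _)
  obtain ⟨y, hy⟩ := hgood
  have hRcl : IsClosed (Set.range (EE (decodeP y))) :=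
    (isCompact_range (continuous_EE _)).isClosed
  set K' := G ∩ fX C hC hCne ⁻¹' (Set.range (EE (decodeP y))) with hK'
  have hK'cl : IsClosed K' :=
    (hcont.mono hGF).preimage_isClosed_of_isClosed hGcl hRcl
  have hinjOn : Set.InjOn (fX C hC hCne) K' := by
    intro a ha b hb hfab
    by_contra hab
    obtain ⟨U, hUB, V, hVB, haU, hbV, hUV⟩ := exists_basic_pair hB hab
    have hmem : fX C hC hCne a ∈ N ⟨(U, V), hUB, hVB, hUV⟩ :=
      ⟨⟨a, ⟨subset_closure haU, ha.1⟩, rfl⟩, ⟨b, ⟨subset_closure hbV, hb.1⟩, hfab.symm⟩⟩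
    obtain ⟨x₀, hx₀⟩ := ha.2
    exact hy ⟨(U, V), hUB, hVB, hUV⟩ x₀ (hx₀ ▸ hmem)
  have hmapsto : ∀ p : ↥K', fX C hC hCne p.1 ∈ Set.range (EE (decodeP y)) := fun p => p.2.2
  have hsurjR : ∀ r : ↥(Set.range (EE (decodeP y))), ∃ p : ↥K', fX C hC hCne p.1 = r.1 := by
    intro r
    have : r.1 ∈ fX C hC hCne '' G := hGsurj ▸ Set.mem_univ _
    obtain ⟨g, hg, hgr⟩ := this
    exact ⟨⟨g, hg, by rw [Set.mem_preimage, hgr]; exact r.2⟩, hgr⟩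
  haveI : CompactSpace ↥K' := isCompact_iff_compactSpace.1 hK'cl.isCompact
  set e : ↥K' ≃ ↥(Set.range (EE (decodeP y))) :=
    Equiv.ofBijective (fun p => ⟨fX C hC hCne p.1, hmapsto p⟩)
      ⟨fun p q hpq => Subtype.ext (hinjOn p.2 q.2 (by simpa using congrArg Subtype.val hpq)),
       fun r => by obtain ⟨p, hp⟩ := hsurjR r; exact ⟨p, Subtype.ext hp⟩⟩ with he
  have hce : Continuous (fun p : ↥K' => (⟨fX C hC hCne p.1, hmapsto p⟩ :
      ↥(Set.range (EE (decodeP y))))) := by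
    apply Continuous.subtype_mk
    have hKF : K' ⊆ Fset C hC hCne := (Set.inter_subset_left).trans hGF
    exact continuousOn_iff_continuous_restrict.1 (hcont.mono hKF)
  have h1 : ↥K' ≃ₜ ↥(Set.range (EE (decodeP y))) :=
    Continuous.homeoOfEquivCompactToT2 (f := e) hce
  have h2 : Dc ≃ₜ ↥(Set.range (EE (decodeP y))) :=
    Continuous.homeoOfEquivCompactToT2 (f := Equiv.ofInjective _ (injective_EE (decodeP y)))
      (Continuous.subtype_mk (continuous_EE _) _)
  exact ⟨K', Set.subset_univ _, ⟨h1.trans h2.symm⟩⟩
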